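/- Let S be an inverse semigroup with a zero element 0 such that Z(S)× is nonempty. Then gr(Γ(S)) = ∞ if and only if Γ(S) is a star graph, i.e., there exists a vertex c ∈ Z(S)× such that c is adjacent to every other vertex and every edge of Γ(S) has c as an endpoint. -/

import Mathlib

namespace ZDG

variable {S : Type*} [Semigroup S]

/-- The natural partial order on an inverse semigroup: `a ≤ b` iff `a = e * b`
for some idempotent `e`. -/
def nle (a b : S) : Prop := ∃ e : S, e * e = e ∧ a = e * b

/-- `omg a b` is the set `ω(a,b)` of common lower bounds of `a` and `b` with respect
to the natural partial order. -/
def omg (a b : S) : Set S := {c | nle c a ∧ nle c b}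

lemma omg_comm (a b : S) : omg a b = omg b a := by
  ext c; exact and_comm

/-- `Zx z` is the set `Z(S)×` of nonzero zero-divisors of `S` (with zero element `z`). -/
def Zx (z : S) : Set S := {a | a ≠ z ∧ ∃ b : S, b ≠ z ∧ omg a b = {z}}

/-- The zero-divisor graph `Γ(S)`: vertices are the elements of `Z(S)×`, and two
distinct vertices `a`, `b` are adjacent iff `ω(a,b) = {z}`. -/
def ZDGraph (z : S) : SimpleGraph (Zx z) where
  Adj a b := (a : S) ≠ (b : S) ∧ omg (a : S) (b : S) = {z}
  symm := by
    refine ⟨?_⟩; rintro a b ⟨h1, h2⟩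
    exact ⟨fun h => h1 h.symm, (omg_comm (b : S) (a : S)).trans h2⟩
  loopless := by refine ⟨?_⟩; rintro a ⟨h1, -⟩; exact h1 rfl

/-- The set of minimal elements of `S \ {z}` with respect to the natural partial order. -/
def MinOf (z : S) : Set S := {x | x ≠ z ∧ ∀ y : S, y ≠ z → nle y x → y = x}

/-- The annihilator of `x`: the set of `y` with `ω(x,y) = {z}`. -/
def Ann (z : S) (x : S) : Set S := {y | omg x y = {z}}

end ZDG

open ZDG

open SimpleGraph

section GraphAux

variable {V : Type*} {G : SimpleGraph V}

lemma star_path_eq (c : V) (hstar : ∀ u v : V, G.Adj u v → u = c ∨ v = c) :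
    ∀ {u w : V} (p : G.Walk u w), p.IsPath → ∀ q : G.Walk u w, q.IsPath → p = q := by
  intro u w p
  induction p with
  | nil =>
    intro _ q hq
    have := SimpleGraph.Path.loop_eq (⟨q, hq⟩ : G.Path _ _)
    exact (congrArg Subtype.val this).symm
  | @cons u x w h p1 ih =>
    intro hp q hq
    cases q with
    | nil =>
      exfalso
      have := SimpleGraph.Path.loop_eq (⟨.cons h p1, hp⟩ : G.Path u u)
      have h2 := congrArg Subtype.val this
      simp at h2
    | @cons _ y _ h2 q1 =>
      rcases hstar u x h with hu | hx
      · cases p1 with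
        | nil =>
          cases q1 with
          | nil => rfl
          | @cons _ t _ h3 q2 =>
            exfalso
            rcases hstar y t h3 with hy | ht
            · exact h2.ne (hu.trans hy.symm)
            · have hsup : u ∉ (Walk.cons h3 q2).support := ((Walk.cons_isPath_iff _ _).1 hq).2
              apply hsup
              rw [Walk.support_cons]
              exact List.mem_cons_of_mem _ ((ht.trans hu.symm) ▸ q2.start_mem_support)
        | @cons _ t _ h3 p2 =>
          exfalso
          rcases hstar x t h3 with hx | ht
          · exact h.ne (hu.trans hx.symm)
          · have hsup : u ∉ (Walk.cons h3 p2).support := ((Walk.cons_isPath_iff _ _).1 hp).2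
            apply hsup
            rw [Walk.support_cons]
            exact List.mem_cons_of_mem _ ((ht.trans hu.symm) ▸ p2.start_mem_support)
      · rcases hstar u y h2 with hu | hy
        · exact absurd (hu.trans hx.symm) h.ne
        · have hyx : y = x := hy.trans hx.symm
          subst hyx
          rw [ih ((Walk.cons_isPath_iff _ _).1 hp).1 q1 ((Walk.cons_isPath_iff _ _).1 hq).1]

lemma star_isAcyclic (c : V) (hstar : ∀ u v : V, G.Adj u v → u = c ∨ v = c) :
    G.IsAcyclic := by
  rw [isAcyclic_iff_path_unique]
  intro v w p q
  exact Subtype.ext (star_path_eq c hstar p.1 p.2 q.1 q.2)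

variable (hPU : ∀ ⦃v w : V⦄ (p q : G.Path v w), p = q)

include hPU

lemma two_paths {v w : V} (p q : G.Walk v w) (hp : p.IsPath) (hq : q.IsPath)
    (hne : p.length ≠ q.length) : False :=
  hne (congrArg (fun r : G.Path v w => r.1.length) (hPU ⟨p, hp⟩ ⟨q, hq⟩))

lemma no_tri {a b c : V} (hab : G.Adj a b) (hbc : G.Adj b c) (hac : G.Adj a c) : False := by
  refine two_paths hPU (.cons hac .nil) (.cons hab (.cons hbc .nil)) ?_ ?_ (by simp)
  · simp [Walk.cons_isPath_iff, hac.ne]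
  · simp [Walk.cons_isPath_iff, hab.ne, hac.ne, hbc.ne]

lemma no_quad {a b c d : V} (hab : G.Adj a b) (had : G.Adj a d) (hdc : G.Adj d c)
    (hcb : G.Adj c b) (hac : a ≠ c) (hbd : b ≠ d) : False := by
  refine two_paths hPU (.cons hab .nil) (.cons had (.cons hdc (.cons hcb .nil))) ?_ ?_ (by simp)
  · simp [Walk.cons_isPath_iff, hab.ne]
  · simp [Walk.cons_isPath_iff, had.ne, hdc.ne, hcb.ne, hac, hab.ne, hbd.symm, hbd]

lemma no_pent {a b p d r : V} (hba : G.Adj b a) (hbp : G.Adj b p) (hpd : G.Adj p d)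
    (hdr : G.Adj d r) (hra : G.Adj r a) (hbd : b ≠ d) (hbr : b ≠ r) (hpr : p ≠ r)
    (hpa : p ≠ a) (hda : d ≠ a) : False := by
  refine two_paths hPU (.cons hba .nil) (.cons hbp (.cons hpd (.cons hdr (.cons hra .nil)))) ?_ ?_
    (by simp)
  · simp [Walk.cons_isPath_iff, hba.ne]
  · simp [Walk.cons_isPath_iff, hba.ne, hbp.ne, hpd.ne, hdr.ne, hra.ne, hbd, hbr, hpr, hpa, hda]

end GraphAux

namespace ZDG

variable {S : Type*} [Semigroup S]

lemma nle_refl (hinv : ∀ a : S, ∃ b : S, a * b * a = a ∧ b * a * b = b) (a : S) :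
    nle a a := by
  obtain ⟨b, h1, -⟩ := hinv a
  refine ⟨a * b, ?_, h1.symm⟩
  rw [← mul_assoc, h1]

lemma nle_trans (hcomm : ∀ e f : S, e * e = e → f * f = f → e * f = f * e)
    {a b c : S} (hab : nle a b) (hbc : nle b c) : nle a c := by
  obtain ⟨e, he, hae⟩ := hab
  obtain ⟨f, hf, hbf⟩ := hbc
  have hef := hcomm e f he hf
  refine ⟨e * f, ?_, ?_⟩
  · rw [mul_assoc e f (e * f), ← mul_assoc f e f, ← hef, mul_assoc e f f, hf,
      ← mul_assoc, he]
  · rw [hae, hbf, mul_assoc]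

lemma z_nle {z : S} (hz : ∀ x : S, z * x = z ∧ x * z = z) (x : S) : nle z x :=
  ⟨z, (hz z).1, ((hz x).1).symm⟩

lemma z_mem_omg {z : S} (hz : ∀ x : S, z * x = z ∧ x * z = z) (a b : S) :
    z ∈ omg a b := ⟨z_nle hz a, z_nle hz b⟩

lemma below_adj (hinv : ∀ a : S, ∃ b : S, a * b * a = a ∧ b * a * b = b)
    (hcomm : ∀ e f : S, e * e = e → f * f = f → e * f = f * e)
    {z : S} (hz : ∀ x : S, z * x = z ∧ x * z = z)
    {x y w : S} (hx : x ≠ z) (hxy : nle x y) (h : omg y w = {z}) :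
    x ≠ w ∧ omg x w = {z} := by
  constructor
  · intro hxw
    apply hx
    have hmem : x ∈ omg y w := ⟨hxy, hxw ▸ nle_refl hinv x⟩
    rw [h] at hmem
    exact hmem
  · ext c
    simp only [Set.mem_singleton_iff]
    constructor
    · rintro ⟨hc1, hc2⟩
      have : c ∈ omg y w := ⟨nle_trans hcomm hc1 hxy, hc2⟩
      rw [h] at this
      exact this
    · rintro rfl
      exact z_mem_omg hz x w

lemma exists_nonzero_lb {z : S} (hz : ∀ x : S, z * x = z ∧ x * z = z)
    {a b : S} (h : omg a b ≠ {z}) :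
    ∃ p : S, p ≠ z ∧ nle p a ∧ nle p b := by
  by_contra h'
  apply h
  ext c
  simp only [Set.mem_singleton_iff]
  constructor
  · rintro ⟨hc1, hc2⟩
    by_contra hcz
    exact absurd ⟨c, hcz, hc1, hc2⟩ h'
  · rintro rfl
    exact z_mem_omg hz a b

lemma zdg_adj {z : S} {u v : Zx z} :
    (ZDGraph z).Adj u v ↔ ((u : S) ≠ (v : S) ∧ omg (u : S) (v : S) = {z}) := Iff.rfl

lemma nonadj_lb {z : S} (hz : ∀ x : S, z * x = z ∧ x * z = z) {u v : Zx z}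
    (hne : u ≠ v) (hnadj : ¬ (ZDGraph z).Adj u v) :
    ∃ p : S, p ≠ z ∧ nle p (u : S) ∧ nle p (v : S) :=
  exists_nonzero_lb hz (fun h => hnadj (zdg_adj.2 ⟨Subtype.coe_ne_coe.mpr hne, h⟩))

section Main

variable (hinv : ∀ a : S, ∃ b : S, a * b * a = a ∧ b * a * b = b)
  (hcomm : ∀ e f : S, e * e = e → f * f = f → e * f = f * e)
  {z : S} (hz : ∀ x : S, z * x = z ∧ x * z = z)
  (hPU : ∀ ⦃v w : Zx z⦄ (p q : (ZDGraph z).Path v w), p = q)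

include hinv hcomm hz hPU

lemma SL {a b c d : Zx z} (hab : (ZDGraph z).Adj a b) (hcd : (ZDGraph z).Adj c d)
    (hac : ¬ (ZDGraph z).Adj a c) (had : ¬ (ZDGraph z).Adj a d)
    (hbc : ¬ (ZDGraph z).Adj b c)
    (hac' : a ≠ c) (had' : a ≠ d) (hbc' : b ≠ c) (hbd' : b ≠ d) : False := by
  obtain ⟨p, hpz, hpa, hpc⟩ := nonadj_lb hz hac' hac
  obtain ⟨r, hrz, hrb, hrc⟩ := nonadj_lb hz hbc' hbc
  have hpb := below_adj hinv hcomm hz hpz hpa hab.2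
  have hpd := below_adj hinv hcomm hz hpz hpc hcd.2
  have hra := below_adj hinv hcomm hz hrz hrb ((omg_comm (b : S) (a : S)).trans hab.2)
  have hrd := below_adj hinv hcomm hz hrz hrc hcd.2
  have hpZx : p ∈ Zx z := ⟨hpz, (b : S), b.2.1, hpb.2⟩
  have hrZx : r ∈ Zx z := ⟨hrz, (a : S), a.2.1, hra.2⟩
  set P : Zx z := ⟨p, hpZx⟩ with hP
  set R : Zx z := ⟨r, hrZx⟩ with hR
  have ePb : (ZDGraph z).Adj P b := zdg_adj.2 ⟨hpb.1, hpb.2⟩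
  have ePd : (ZDGraph z).Adj P d := zdg_adj.2 ⟨hpd.1, hpd.2⟩
  have eRa : (ZDGraph z).Adj R a := zdg_adj.2 ⟨hra.1, hra.2⟩
  have eRd : (ZDGraph z).Adj R d := zdg_adj.2 ⟨hrd.1, hrd.2⟩
  have hpa' : p ≠ (a : S) := by
    intro hpa2
    have h3 := below_adj hinv hcomm hz (hpa2 ▸ hpz) (hpa2 ▸ hpc) hcd.2
    exact had (zdg_adj.2 ⟨h3.1, h3.2⟩)
  have hpr : p ≠ r := by
    intro hpr2
    have hm : p ∈ omg r (a : S) := ⟨hpr2 ▸ nle_refl hinv p, hpa⟩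
    rw [hra.2] at hm
    exact hpz hm
  by_cases hrb2 : r = (b : S)
  · have ebd : (ZDGraph z).Adj b d := zdg_adj.2 ⟨hrb2 ▸ hrd.1, hrb2 ▸ hrd.2⟩
    exact no_tri hPU ePb ebd ePd
  · exact no_pent hPU hab.symm ePb.symm ePd eRd.symm eRa hbd'
      (fun h => hrb2 (congrArg Subtype.val h).symm)
      (fun h => hpr (congrArg Subtype.val h))
      (fun h => hpa' (congrArg Subtype.val h))
      (fun h => had' h.symm)

lemma edges_meet {a b c d : Zx z} (hab : (ZDGraph z).Adj a b)
    (hcd : (ZDGraph z).Adj c d) : a = c ∨ a = d ∨ b = c ∨ b = d := by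
  by_contra hcon
  push_neg at hcon
  obtain ⟨h1, h2, h3, h4⟩ := hcon
  by_cases hbd : (ZDGraph z).Adj b d
  · by_cases hbc : (ZDGraph z).Adj b c
    · exact no_tri hPU hbc hcd hbd
    · by_cases hac : (ZDGraph z).Adj a c
      · exact no_quad hPU hab hac hcd hbd.symm h2 h3
      · by_cases had2 : (ZDGraph z).Adj a d
        · exact no_tri hPU hab hbd had2
        · exact SL hinv hcomm hz hPU hab hcd hac had2 hbc h1 h2 h3 h4
  · by_cases hbc : (ZDGraph z).Adj b c
    · by_cases hac : (ZDGraph z).Adj a c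
      · exact no_tri hPU hab hbc hac
      · by_cases had2 : (ZDGraph z).Adj a d
        · exact no_quad hPU hab had2 hcd.symm hbc.symm h1 h4
        · exact SL hinv hcomm hz hPU hab hcd.symm had2 hac hbd h2 h1 h4 h3
    · by_cases hac : (ZDGraph z).Adj a c
      · by_cases had2 : (ZDGraph z).Adj a d
        · exact no_tri hPU hac hcd had2
        · exact SL hinv hcomm hz hPU hab.symm hcd.symm hbd hbc had2 h4 h3 h2 h1
      · by_cases had2 : (ZDGraph z).Adj a d
        · exact SL hinv hcomm hz hPU hab.symm hcd hbc hbd hac h3 h4 h1 h2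
        · exact SL hinv hcomm hz hPU hab hcd hac had2 hbc h1 h2 h3 h4

end Main

end ZDG


/-- `gr(Γ(S)) = ∞` iff `Γ(S)` is a star graph. -/
theorem stmt8 {S : Type*} [Semigroup S] [Nontrivial S]
    (hinv : ∀ a : S, ∃ b : S, a * b * a = a ∧ b * a * b = b)
    (hcomm : ∀ e f : S, e * e = e → f * f = f → e * f = f * e)
    (z : S) (hz : ∀ x : S, z * x = z ∧ x * z = z)
    (h1 : (Zx z).Nonempty) :
    (ZDGraph z).egirth = ⊤ ↔
      ∃ c : Zx z, (∀ v : Zx z, v ≠ c → (ZDGraph z).Adj c v) ∧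
        ∀ u v : Zx z, (ZDGraph z).Adj u v → u = c ∨ v = c := by
  constructor
  · intro h
    have hA : (ZDGraph z).IsAcyclic := SimpleGraph.egirth_eq_top.1 h
    have hPU := SimpleGraph.isAcyclic_iff_path_unique.1 hA
    obtain ⟨a0, ha0⟩ := h1
    obtain ⟨ha0z, b0, hb0z, hω⟩ := ha0
    have ha0Zx : a0 ∈ Zx z := ⟨ha0z, b0, hb0z, hω⟩
    have hb0Zx : b0 ∈ Zx z := ⟨hb0z, a0, ha0z, (omg_comm b0 a0).trans hω⟩
    set A : Zx z := ⟨a0, ha0Zx⟩ with hA1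
    set B : Zx z := ⟨b0, hb0Zx⟩ with hB1
    have hne : a0 ≠ b0 := by
      intro hh
      have hm : a0 ∈ omg a0 b0 := ⟨nle_refl hinv a0, hh ▸ nle_refl hinv a0⟩
      rw [hω] at hm
      exact ha0z hm
    have eAB : (ZDGraph z).Adj A B := zdg_adj.2 ⟨hne, hω⟩
    have hnbr : ∀ v : Zx z, ∃ w : Zx z, (ZDGraph z).Adj v w := by
      intro v
      obtain ⟨hvz, w, hwz, hvw⟩ := v.2
      have hwZx : w ∈ Zx z := ⟨hwz, (v : S), hvz, (omg_comm w (v : S)).trans hvw⟩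
      have hvwne : (v : S) ≠ w := by
        intro hh
        have hm : (v : S) ∈ omg (v : S) w := ⟨nle_refl hinv _, hh ▸ nle_refl hinv _⟩
        rw [hvw] at hm
        exact hvz hm
      exact ⟨⟨w, hwZx⟩, zdg_adj.2 ⟨hvwne, hvw⟩⟩
    by_cases hall : ∀ u v : Zx z, (ZDGraph z).Adj u v → u = A ∨ v = A
    · refine ⟨A, ?_, hall⟩
      intro v hv
      obtain ⟨w, hw⟩ := hnbr v
      rcases hall v w hw with h' | h'
      · exact absurd h' hv
      · exact (h' ▸ hw).symm
    · push_neg at hall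
      obtain ⟨u, w, huw, huA, hwA⟩ := hall
      have hUB : ∃ U : Zx z, U ≠ A ∧ (ZDGraph z).Adj U B := by
        rcases edges_meet hinv hcomm hz hPU huw eAB with h' | h' | h' | h'
        · exact absurd h' huA
        · exact ⟨w, hwA, (h' ▸ huw).symm⟩
        · exact absurd h' hwA
        · exact ⟨u, huA, h' ▸ huw⟩
      obtain ⟨U, hUA, hU⟩ := hUB
      have hedge : ∀ x y : Zx z, (ZDGraph z).Adj x y → x = B ∨ y = B := by
        intro x y hxy
        rcases edges_meet hinv hcomm hz hPU hxy eAB with h' | h' | h' | h'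
        · rcases edges_meet hinv hcomm hz hPU hxy hU with h'' | h'' | h'' | h''
          · exact absurd (h''.symm.trans h') hUA
          · exact Or.inl h''
          · exact (no_tri hPU (h' ▸ h'' ▸ hxy) hU eAB).elim
          · exact Or.inr h''
        · exact Or.inl h'
        · rcases edges_meet hinv hcomm hz hPU hxy hU with h'' | h'' | h'' | h''
          · exact (no_tri hPU (h' ▸ h'' ▸ hxy).symm hU eAB).elim
          · exact Or.inl h''
          · exact absurd (h''.symm.trans h') hUA
          · exact Or.inr h''
        · exact Or.inr h'
      refine ⟨B, ?_, hedge⟩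
      intro v hv
      obtain ⟨w', hw'⟩ := hnbr v
      rcases hedge v w' hw' with h' | h'
      · exact absurd h' hv
      · exact (h' ▸ hw').symm
  · rintro ⟨c, -, hstar⟩
    exact SimpleGraph.IsAcyclic.egirth_eq_top (star_isAcyclic c hstar)
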